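/- arXiv:2310.04096 — 3 statements merged into one kernel-verified Lean document; each statement's English description precedes it below -/
import Mathlib

section
/- Let C ⊆ ℝ^n be a compact convex set, f : ℝ^n → ℝ convex and differentiable on an open set containing C, and suppose (C,f) satisfies the strong (M,0)-growth property for some M > 0. Then the iterates of the Frank–Wolfe algorithm with open-loop step sizes η_t = ℓ/(t+ℓ), for any ℓ ∈ ℕ with ℓ ≥ 2, satisfy primaldual_t ≤ η_t · M for all t ≥ 1. -/
open Set Finset Real Pointwise

noncomputable section

abbrev Eucl (n : ℕ) := EuclideanSpace ℝ (Fin n)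

variable {n : ℕ}

/-- A Frank–Wolfe vertex at `x`: a minimizer over `C` of the linear function `y ↦ ⟪∇f(x), y⟫`. -/
def IsFWVertex (C : Set (Eucl n)) (f : Eucl n → ℝ) (x v : Eucl n) : Prop :=
  v ∈ C ∧ ∀ y ∈ C, (inner ℝ (gradient f x) v : ℝ) ≤ (inner ℝ (gradient f x) y : ℝ)

/-- The Wolfe gap `gap(x) = max_{y ∈ C} ⟪∇f(x), x - y⟫`. -/
def gapF (C : Set (Eucl n)) (f : Eucl n → ℝ) (x : Eucl n) : ℝ :=
  sSup ((fun y => (inner ℝ (gradient f x) (x - y) : ℝ)) '' C)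

/-- The primal suboptimality gap `subopt(x) = f(x) - min_{y ∈ C} f(y)`. -/
def suboptF (C : Set (Eucl n)) (f : Eucl n → ℝ) (x : Eucl n) : ℝ :=
  f x - sInf (f '' C)

/-- Bregman divergence `D_f(y, x) = f(y) - f(x) - ⟪∇f(x), y - x⟫`. -/
def bregmanD (f : Eucl n → ℝ) (y x : Eucl n) : ℝ :=
  f y - f x - (inner ℝ (gradient f x) (y - x) : ℝ)

/-- Strong `(M, r)`-growth property. -/
def StrongGrowth (C : Set (Eucl n)) (f : Eucl n → ℝ) (M r : ℝ) : Prop :=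
  ∀ x ∈ C, ∀ v, IsFWVertex C f x v → ∀ η ∈ Icc (0:ℝ) 1,
    bregmanD f (x + η • (v - x)) x ≤ M * η ^ 2 / 2 * gapF C f x ^ r

/-- Weak `(M, r)`-growth property. -/
def WeakGrowth (C : Set (Eucl n)) (f : Eucl n → ℝ) (M r : ℝ) : Prop :=
  ∀ x ∈ C, ∀ v, IsFWVertex C f x v → ∀ η ∈ Icc (0:ℝ) 1,
    bregmanD f (x + η • (v - x)) x * suboptF C f x ^ (1 - r) ≤ M * η ^ 2 / 2 * gapF C f x

/-- Gaps `(m, r)`-growth property. -/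
def GapsGrowth (C : Set (Eucl n)) (f : Eucl n → ℝ) (m r : ℝ) : Prop :=
  ∀ x ∈ C, m * suboptF C f x ^ (1 - r) ≤ gapF C f x

/-- `primaldual_t = min_{0 ≤ k ≤ t} (f(x_t) - f(x_k) + gap_k)`. -/
def primaldualSeq (C : Set (Eucl n)) (f : Eucl n → ℝ) (x : ℕ → Eucl n) (t : ℕ) : ℝ :=
  (Finset.range (t + 1)).inf' (Finset.nonempty_range_iff.mpr (Nat.succ_ne_zero t))
    (fun k => f (x t) - f (x k) + gapF C f (x k))

/-! Under strong `(M, 0)`-growth, one Frank–Wolfe step decreases `f` by `η · gap` up to an error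
`M η² / 2`. Since the primal-dual gap at step `t` is dominated by `gap_t` and shifts by the change
of `f`, it obeys `pd_{t+1} ≤ (1 - η_t) pd_t + M η_t² / 2`, and the open-loop step sizes with
`ℓ ≥ 2` are exactly slow enough that `η_t M` is a supersolution of this recursion. -/

theorem Convex.iterate_mem {E : Type*} [AddCommGroup E] [Module ℝ E] {C : Set E}
    (hC : Convex ℝ C) {x v : ℕ → E} {η : ℕ → ℝ} (hx0 : x 0 ∈ C) (hv : ∀ t, v t ∈ C)
    (hη : ∀ t, η t ∈ Icc (0 : ℝ) 1) (hstep : ∀ t, x (t + 1) = x t + η t • (v t - x t)) :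
    ∀ t, x t ∈ C
  | 0 => hx0
  | t + 1 => hstep t ▸ hC.add_smul_sub_mem (hC.iterate_mem hx0 hv hη hstep t) (hv t) (hη t)

section FrankWolfe

variable {C : Set (Eucl n)} {f : Eucl n → ℝ}

theorem IsFWVertex.gapF_eq {x v : Eucl n} (hv : IsFWVertex C f x v) :
    gapF C f x = inner ℝ (gradient f x) (x - v) := by
  refine IsGreatest.csSup_eq ⟨⟨v, hv.1, rfl⟩, ?_⟩
  rintro _ ⟨y, hy, rfl⟩
  simp only [inner_sub_right]
  linarith [hv.2 y hy]

theorem StrongGrowth.apply_fw_step_le {M r : ℝ} (hgrowth : StrongGrowth C f M r)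
    {x v : Eucl n} (hx : x ∈ C) (hv : IsFWVertex C f x v) {η : ℝ} (hη : η ∈ Icc (0 : ℝ) 1) :
    f (x + η • (v - x)) ≤ f x - η * gapF C f x + M * η ^ 2 / 2 * gapF C f x ^ r := by
  have hbreg := hgrowth x hx v hv η hη
  have hinner : inner ℝ (gradient f x) (x + η • (v - x) - x) = -(η * gapF C f x) := by
    rw [hv.gapF_eq, add_sub_cancel_left, inner_smul_right, ← neg_sub, inner_neg_right]
    ring
  rw [bregmanD, hinner] at hbreg
  linarith

theorem primaldualSeq_le_gapF (x : ℕ → Eucl n) (t : ℕ) :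
    primaldualSeq C f x t ≤ gapF C f (x t) := by
  simpa only [primaldualSeq, sub_self, zero_add] using
    Finset.inf'_le (fun k => f (x t) - f (x k) + gapF C f (x k)) (self_mem_range_succ t)

theorem primaldualSeq_succ_le {x : ℕ → Eucl n} {t : ℕ} {η c : ℝ} (hη : 0 ≤ η)
    (hdescent : f (x (t + 1)) ≤ f (x t) - η * gapF C f (x t) + c) :
    primaldualSeq C f x (t + 1) ≤ (1 - η) * primaldualSeq C f x t + c := by
  obtain ⟨k, hk, hpd⟩ := Finset.exists_mem_eq_inf' (nonempty_range_add_one (n := t))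
    (fun k => f (x t) - f (x k) + gapF C f (x k))
  have hpd_succ : primaldualSeq C f x (t + 1) ≤ f (x (t + 1)) - f (x k) + gapF C f (x k) :=
    Finset.inf'_le (fun k => f (x (t + 1)) - f (x k) + gapF C f (x k))
      (range_subset_range.mpr (t + 1).le_succ hk)
  have hpd_eq : primaldualSeq C f x t = f (x t) - f (x k) + gapF C f (x k) := hpd
  have hgap := mul_le_mul_of_nonneg_left (primaldualSeq_le_gapF (C := C) (f := f) x t) hη
  rw [hpd_eq] at hgap ⊢
  linarith

end FrankWolfe

theorem open_loop_step_recursion {ℓ s : ℝ} (hℓ : 2 ≤ ℓ) (hs : 0 ≤ s) :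
    (1 - ℓ / (s + ℓ)) * (ℓ / (s + ℓ)) + (ℓ / (s + ℓ)) ^ 2 / 2 ≤ ℓ / (s + 1 + ℓ) := by
  have hsℓ : 0 < s + ℓ := by linarith
  have hdiff : ℓ / (s + 1 + ℓ) - ((1 - ℓ / (s + ℓ)) * (ℓ / (s + ℓ)) + (ℓ / (s + ℓ)) ^ 2 / 2) =
      ℓ * (s * (ℓ - 2) + ℓ * (ℓ - 1)) / (2 * (s + ℓ) ^ 2 * (s + 1 + ℓ)) := by
    field_simp
    ring
  have hnum : 0 ≤ s * (ℓ - 2) + ℓ * (ℓ - 1) := by nlinarith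
  rw [← sub_nonneg, hdiff]
  positivity

/-- The case `t = 0` needs no bound on `a 0`, because `η 0 = 1` kills it. -/
theorem le_mul_of_step_recursion {a η : ℕ → ℝ} {M : ℝ} (hM : 0 ≤ M) (hη0 : η 0 = 1)
    (hη_le : ∀ t, η t ≤ 1) (hη_succ : ∀ t, (1 - η t) * η t + η t ^ 2 / 2 ≤ η (t + 1))
    (hrec : ∀ t, a (t + 1) ≤ (1 - η t) * a t + M * η t ^ 2 / 2) :
    ∀ t, 1 ≤ t → a t ≤ η t * M := by
  have step : ∀ t, (1 - η t) * a t ≤ (1 - η t) * (η t * M) → a (t + 1) ≤ η (t + 1) * M :=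
    fun t h => by nlinarith [hrec t, mul_le_mul_of_nonneg_right (hη_succ t) hM]
  intro t ht
  obtain ⟨t, rfl⟩ := Nat.exists_eq_add_of_le' ht
  induction t with
  | zero => exact step 0 (by simp [hη0])
  | succ t ih =>
    exact step _ (mul_le_mul_of_nonneg_left (ih (by omega)) (by linarith [hη_le (t + 1)]))

theorem fw_strong_growth_zero_rate_general
    (n : ℕ) (C : Set (Eucl n)) (f : Eucl n → ℝ)
    (hCconv : Convex ℝ C)
    (M : ℝ) (hM : 0 < M) (hgrowth : StrongGrowth C f M 0)
    (ℓ : ℕ) (hℓ : 2 ≤ ℓ)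
    (η : ℕ → ℝ) (hη : ∀ t : ℕ, η t = (ℓ : ℝ) / ((t : ℝ) + ℓ))
    (x v : ℕ → Eucl n)
    (hx0 : x 0 ∈ C)
    (hv : ∀ t : ℕ, IsFWVertex C f (x t) (v t))
    (hstep : ∀ t : ℕ, x (t + 1) = x t + η t • (v t - x t))
    (t : ℕ) (ht : 1 ≤ t) :
    primaldualSeq C f x t ≤ η t * M := by
  have hℓ2 : (2 : ℝ) ≤ ℓ := by exact_mod_cast hℓ
  have hη_mem : ∀ s, η s ∈ Icc (0 : ℝ) 1 := fun s => by
    rw [hη, Set.mem_Icc, div_le_one (by positivity)]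
    exact ⟨by positivity, by linarith [s.cast_nonneg (α := ℝ)]⟩
  have hxC := hCconv.iterate_mem hx0 (fun s => (hv s).1) hη_mem hstep
  have hrec : ∀ s, primaldualSeq C f x (s + 1) ≤
      (1 - η s) * primaldualSeq C f x s + M * η s ^ 2 / 2 := fun s =>
    primaldualSeq_succ_le (hη_mem s).1 <| by
      simpa only [← hstep, rpow_zero, mul_one] using
        hgrowth.apply_fw_step_le (hxC s) (hv s) (hη_mem s)
  refine le_mul_of_step_recursion hM.le ?_ (fun s => (hη_mem s).2) (fun s => ?_) hrec t ht
  · rw [hη, Nat.cast_zero, zero_add, div_self (by positivity)]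
  · simpa only [hη, Nat.cast_succ] using open_loop_step_recursion hℓ2 s.cast_nonneg

/-- **Theorem (Strong `(M,0)`-growth).** For FW with open-loop step-sizes
`η_t = ℓ/(t+ℓ)`, `ℓ ≥ 2`, under strong `(M,0)`-growth: `primaldual_t ≤ η_t · M` for `t ≥ 1`. -/
theorem fw_strong_growth_zero_rate
    (n : ℕ) (C : Set (Eucl n)) (f : Eucl n → ℝ)
    (hCcomp : IsCompact C) (hCconv : Convex ℝ C) (hCne : C.Nonempty)
    (hfconv : ConvexOn ℝ C f)
    (U : Set (Eucl n)) (hUopen : IsOpen U) (hCU : C ⊆ U)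
    (hfdiff : DifferentiableOn ℝ f U)
    (M : ℝ) (hM : 0 < M) (hgrowth : StrongGrowth C f M 0)
    (ℓ : ℕ) (hℓ : 2 ≤ ℓ)
    (η : ℕ → ℝ) (hη : ∀ t : ℕ, η t = (ℓ : ℝ) / ((t : ℝ) + ℓ))
    (x v : ℕ → Eucl n)
    (hx0 : x 0 ∈ C)
    (hv : ∀ t : ℕ, IsFWVertex C f (x t) (v t))
    (hstep : ∀ t : ℕ, x (t + 1) = x t + η t • (v t - x t))
    (t : ℕ) (ht : 1 ≤ t) :
    primaldualSeq C f x t ≤ η t * M :=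
  fw_strong_growth_zero_rate_general n C f hCconv M hM hgrowth ℓ hℓ η hη x v hx0 hv hstep t ht
end
end

section
/- Let ℓ ∈ ℕ with ℓ ≥ 1 and define η_t = ℓ/(t+ℓ) for t ∈ ℕ. Then for all S, t ∈ ℕ with 1 ≤ S ≤ t, it holds that ∏_{i=S}^{t} (1 − η_i) ≤ (η_t/η_{S−1})^ℓ. -/
/-! Since `1 - η_i = 1 - ℓ/(i+ℓ)` and `η_i/η_{i-1} = 1 - 1/(i+ℓ)`, Bernoulli's inequality gives
`1 - η_i ≤ (η_i/η_{i-1})^ℓ` for every `i ≥ 1`; multiplying over `S ≤ i ≤ t`, the right-hand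
sides telescope to `(η_t/η_{S-1})^ℓ`. -/

open Finset

theorem Finset.prod_Icc_div_pred₀ {G₀ : Type*} [CommGroupWithZero G₀] {f : ℕ → G₀}
    (hf : ∀ i, f i ≠ 0) {m n : ℕ} (hm : 1 ≤ m) (hmn : m ≤ n + 1) :
    ∏ i ∈ Icc m n, f i / f (i - 1) = f n / f (m - 1) := by
  induction n, (by omega : m - 1 ≤ n) using Nat.le_induction with
  | base => rw [Icc_eq_empty (by omega), prod_empty, div_self (hf _)]
  | succ n hn ih =>
    rw [prod_Icc_succ_top (by omega), ih (by omega), Nat.add_sub_cancel,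
      div_mul_div_cancel₀' (hf n)]

section OpenLoop

variable {ℓ : ℕ} {η : ℕ → ℝ} (hη : ∀ t : ℕ, η t = (ℓ : ℝ) / ((t : ℝ) + ℓ))
include hη

lemma one_sub_openLoop_nonneg (i : ℕ) : 0 ≤ 1 - η i := by
  rw [hη, sub_nonneg]
  exact div_le_one_of_le₀ (by linarith [(Nat.cast_nonneg i : (0 : ℝ) ≤ i)]) (by positivity)

lemma openLoop_ne_zero (hℓ : 1 ≤ ℓ) (i : ℕ) : η i ≠ 0 := by
  have : (0 : ℝ) < ℓ := by exact_mod_cast hℓ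
  rw [hη]; positivity

lemma one_sub_openLoop_le_div_pow (hℓ : 1 ≤ ℓ) {i : ℕ} (hi : 1 ≤ i) :
    1 - η i ≤ (η i / η (i - 1)) ^ ℓ := by
  have hℓ₀ : (0 : ℝ) < ℓ := by exact_mod_cast hℓ
  have hc : (1 : ℝ) ≤ i + ℓ := by
    have : (1 : ℝ) ≤ i := by exact_mod_cast hi
    linarith
  have hlhs : 1 - η i = 1 + ℓ * (-1 / ((i : ℝ) + ℓ)) := by
    rw [hη]; field_simp; ring
  have hrhs : η i / η (i - 1) = 1 + -1 / ((i : ℝ) + ℓ) := by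
    rw [hη, hη, Nat.cast_pred hi]
    field_simp
    ring
  have hbound : (-2 : ℝ) ≤ -1 / ((i : ℝ) + ℓ) := by
    rw [neg_div, neg_le_neg_iff]
    linarith [div_le_one_of_le₀ hc (by linarith : (0 : ℝ) ≤ i + ℓ)]
  rw [hlhs, hrhs]
  exact one_add_mul_le_pow hbound ℓ

end OpenLoop

/-- **Lemma (telescoping product, simple form).** For `η_t = ℓ/(t+ℓ)` and `1 ≤ S ≤ t`:
`∏_{i=S}^{t} (1 - η_i) ≤ (η_t / η_{S-1})^ℓ`. -/
theorem telescope_simple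
    (ℓ : ℕ) (hℓ : 1 ≤ ℓ)
    (η : ℕ → ℝ) (hη : ∀ t : ℕ, η t = (ℓ : ℝ) / ((t : ℝ) + ℓ))
    (S t : ℕ) (hS : 1 ≤ S) (hSt : S ≤ t) :
    ∏ i ∈ Finset.Icc S t, (1 - η i) ≤ (η t / η (S - 1)) ^ ℓ := by
  calc ∏ i ∈ Icc S t, (1 - η i)
      ≤ ∏ i ∈ Icc S t, (η i / η (i - 1)) ^ ℓ :=
        prod_le_prod (fun i _ ↦ one_sub_openLoop_nonneg hη i) fun i hi ↦
          one_sub_openLoop_le_div_pow hη hℓ (hS.trans (mem_Icc.mp hi).1)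
    _ = (η t / η (S - 1)) ^ ℓ := by
        rw [prod_pow, prod_Icc_div_pred₀ (openLoop_ne_zero hη hℓ) hS (by omega)]
end

section
/- Let ℓ ∈ ℕ with ℓ ≥ 1 and define η_t = ℓ/(t+ℓ) for t ∈ ℕ. Then for all S, t ∈ ℕ with 1 ≤ S ≤ t and every ε ∈ [0, ℓ], it holds that ∏_{i=S}^{t} (1 − (1 − ε/ℓ)·η_i) ≤ (η_t/η_{S−1})^{ℓ−ε} · exp(εℓ/S). -/
open Finset Set Real

/-!
With `x = i + ℓ` and `a = ℓ - ε`, the `i`-th factor is `(x - a) / x`. Since `log (x / (x - 1))`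
lies between `1 / x` and `1 / (x - 1)`, and `1 - a ≤ ε` because `ℓ ≥ 1`, one gets
`log ((x - a) / x) ≤ a log ((x - 1) / x) + ε (1 / (x - 1) - 1 / x)`. Summed over `i`, both terms
on the right telescope: the first to `(ℓ - ε) log (η_t / η_{S-1})`, the second to at most
`ε / (S + ℓ - 1) ≤ ε ℓ / S`.
-/

lemma log_sub_log_sub_one_mem_Icc {x : ℝ} (hx : 1 < x) :
    log x - log (x - 1) ∈ Icc x⁻¹ (x - 1)⁻¹ := by
  have hx₀ : 0 < x - 1 := by linarith
  rw [← log_div (by positivity) hx₀.ne']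
  constructor
  · have := one_sub_inv_le_log_of_pos (div_pos (by positivity) hx₀)
    rwa [inv_div, one_sub_div (by positivity), sub_sub_cancel, one_div] at this
  · have := log_le_sub_one_of_pos (div_pos (by positivity) hx₀)
    rwa [div_sub_one hx₀.ne', sub_sub_cancel, one_div] at this

lemma log_sub_sub_log_le {x a c : ℝ} (hx : 1 < x) (hax : a < x) (hc : 0 ≤ c) (hac : 1 - a ≤ c) :
    log (x - a) - log x ≤ a * (log (x - 1) - log x) + c * ((x - 1)⁻¹ - x⁻¹) := by
  have hx₀ : 0 < x - 1 := by linarith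
  obtain ⟨hL₁, hL₂⟩ := log_sub_log_sub_one_mem_Icc hx
  have hnum : log (x - a) - log (x - 1) ≤ (1 - a) * (x - 1)⁻¹ := by
    have := log_le_sub_one_of_pos (div_pos (sub_pos.2 hax) hx₀)
    rwa [log_div (by linarith) hx₀.ne', div_sub_one hx₀.ne', sub_sub_sub_cancel_left,
      div_eq_mul_inv] at this
  set m := (x - 1)⁻¹ - (log x - log (x - 1))
  have hm : (1 - a) * m ≤ c * ((x - 1)⁻¹ - x⁻¹) :=
    calc (1 - a) * m ≤ c * m := mul_le_mul_of_nonneg_right hac (by linarith)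
      _ ≤ c * ((x - 1)⁻¹ - x⁻¹) := mul_le_mul_of_nonneg_left (by linarith) hc
  linarith

lemma sum_Icc_sub_shift (g : ℝ → ℝ) (c : ℝ) {S t : ℕ} (hSt : S ≤ t) :
    ∑ i ∈ Icc S t, (g (i + c - 1) - g (i + c)) = g (S + c - 1) - g (t + c) := by
  have hshift (j : ℕ) : ((j + 1 : ℕ) : ℝ) + c - 1 = j + c := by push_cast; ring
  have := sum_Icc_sub hSt fun j : ℕ ↦ -g (j + c - 1)
  simp only [hshift, sub_neg_eq_add, neg_add_eq_sub] at this
  rw [← this]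

lemma sum_log_div_le {ℓ ε : ℝ} (hℓ : 1 ≤ ℓ) (hε : 0 ≤ ε) {S t : ℕ} (hS : 1 ≤ S) (hSt : S ≤ t) :
    ∑ i ∈ Icc S t, log ((i + ε) / (i + ℓ)) ≤
      (ℓ - ε) * (log (S + ℓ - 1) - log (t + ℓ)) + ε * ℓ / S := by
  have hS₁ : (1 : ℝ) ≤ S := by exact_mod_cast hS
  calc ∑ i ∈ Icc S t, log ((i + ε) / (i + ℓ))
      ≤ ∑ i ∈ Icc S t, ((ℓ - ε) * (log (i + ℓ - 1) - log (i + ℓ)) +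
          ε * ((i + ℓ - 1)⁻¹ - (i + ℓ)⁻¹)) := by
        refine sum_le_sum fun i hi ↦ ?_
        have hi : (1 : ℝ) ≤ i := by exact_mod_cast hS.trans (mem_Icc.1 hi).1
        rw [log_div (by positivity) (by positivity)]
        have := log_sub_sub_log_le (x := i + ℓ) (a := ℓ - ε) (by linarith) (by linarith) hε
          (by linarith)
        rwa [show (i : ℝ) + ℓ - (ℓ - ε) = i + ε by ring] at this
    _ = (ℓ - ε) * (log (S + ℓ - 1) - log (t + ℓ)) + ε * ((S + ℓ - 1)⁻¹ - (t + ℓ)⁻¹) := by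
        rw [sum_add_distrib, ← mul_sum, ← mul_sum, sum_Icc_sub_shift log ℓ hSt,
          sum_Icc_sub_shift (·⁻¹) ℓ hSt]
    _ ≤ (ℓ - ε) * (log (S + ℓ - 1) - log (t + ℓ)) + ε * (ℓ / S) := by
        gcongr
        calc ((S : ℝ) + ℓ - 1)⁻¹ - ((t : ℝ) + ℓ)⁻¹
            ≤ ((S : ℝ) + ℓ - 1)⁻¹ := sub_le_self _ (by positivity)
          _ ≤ (S : ℝ)⁻¹ := inv_anti₀ (by positivity) (by linarith)
          _ ≤ ℓ / S := by rw [inv_eq_one_div]; gcongr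
    _ = (ℓ - ε) * (log (S + ℓ - 1) - log (t + ℓ)) + ε * ℓ / S := by rw [mul_div_assoc]

/-- **Lemma (telescoping product, general form).** For `η_t = ℓ/(t+ℓ)`, `1 ≤ S ≤ t`, `ε ∈ [0,ℓ]`:
`∏_{i=S}^{t} (1 - (1 - ε/ℓ)η_i) ≤ (η_t / η_{S-1})^{ℓ-ε} · exp(εℓ/S)`. -/
theorem telescope_general
    (ℓ : ℕ) (hℓ : 1 ≤ ℓ)
    (η : ℕ → ℝ) (hη : ∀ t : ℕ, η t = (ℓ : ℝ) / ((t : ℝ) + ℓ))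
    (S t : ℕ) (hS : 1 ≤ S) (hSt : S ≤ t)
    (ε : ℝ) (hε : ε ∈ Icc (0 : ℝ) (ℓ : ℝ)) :
    ∏ i ∈ Finset.Icc S t, (1 - (1 - ε / ℓ) * η i) ≤
      (η t / η (S - 1)) ^ ((ℓ : ℝ) - ε) * Real.exp (ε * ℓ / S) := by
  have hℓ₁ : (1 : ℝ) ≤ ℓ := by exact_mod_cast hℓ
  have hS₀ : (0 : ℝ) < S + ℓ - 1 := by
    have : (1 : ℝ) ≤ S := by exact_mod_cast hS
    linarith
  have hfactor (i : ℕ) : 1 - (1 - ε / ℓ) * η i = (i + ε) / (i + ℓ) := by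
    rw [hη]; field_simp; ring
  have hfactor_pos (i : ℕ) (hi : i ∈ Finset.Icc S t) : 0 < ((i : ℝ) + ε) / (i + ℓ) := by
    have : (1 : ℝ) ≤ i := by exact_mod_cast hS.trans (Finset.mem_Icc.1 hi).1
    have := hε.1
    positivity
  have hratio : η t / η (S - 1) = (S + ℓ - 1) / (t + ℓ) := by
    rw [hη, hη, Nat.cast_sub hS, div_div_div_cancel_left' _ _ (by positivity)]; push_cast; ring
  rw [prod_congr rfl fun i _ ↦ hfactor i, hratio, rpow_def_of_pos (by positivity), ← exp_add,
    ← prod_congr rfl fun i hi ↦ exp_log (hfactor_pos i hi), ← exp_sum, exp_le_exp,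
    log_div hS₀.ne' (by positivity)]
  linarith [sum_log_div_le hℓ₁ hε.1 hS hSt]
end
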